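/- arXiv:1909.13213 — 3 statements merged into one kernel-verified Lean document; each statement's English description precedes it below -/
import Mathlib

section
/- Let i ≥ 1 be an integer and let (X_m)_{m≥1} be i.i.d. uniform on {1,…,i} with partial sums S_n = X_1 + ⋯ + X_n. Then for every integer k ≥ 1, P(∃ n ≥ 1, S_n = k) = Σ_{h=1}^{min(i,k)} Σ_{(x_1,…,x_i)∈ℕ^i, x_1+2x_2+⋯+i·x_i = k−h} ((x_1+⋯+x_i)! / (x_1!⋯x_i!)) · i^{−(x_1+⋯+x_i+1)}. -/
/-!
Since the steps are almost surely at least `1`, the walk visits each level at most once, so the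
hitting probability of `k` is `∑ₙ P(Sₙ = k)`, and `P(Sₙ = k) = [t^k] q(t)ⁿ / iⁿ` with
`q = t + t² + ⋯ + tⁱ`. Writing `q^(n+1) = q · qⁿ` gives
`[t^k] q^(n+1) = ∑_{h=1}^{min(i,k)} [t^(k-h)] qⁿ`, and the multinomial theorem expands
`[t^(k-h)] qⁿ` as the sum of the multinomial coefficients of the `x ∈ ℕ^i` with
`x₁ + ⋯ + xᵢ = n` and `x₁ + 2x₂ + ⋯ + i·xᵢ = k - h`.
-/

open MeasureTheory ProbabilityTheory Finset Polynomial

theorem coeff_sum_X_pow_mul {R : Type*} [Semiring R] (s : Finset ℕ) (p : R[X]) (N : ℕ) :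
    ((∑ h ∈ s, X ^ h) * p).coeff N = ∑ h ∈ s with h ≤ N, p.coeff (N - h) := by
  simp only [sum_mul, finsetSum_coeff, coeff_X_pow_mul', sum_filter]

theorem coeff_pow_sum_X_pow_eq_zero {R : Type*} [CommSemiring R] {s : Finset ℕ} (hs : 0 ∉ s)
    {n N : ℕ} (h : N < n) : ((∑ h ∈ s, (X : R[X]) ^ h) ^ n).coeff N = 0 := by
  have hX : X ∣ ∑ h ∈ s, (X : R[X]) ^ h :=
    dvd_sum fun h hh => dvd_pow_self X (by rintro rfl; exact hs hh)
  exact X_pow_dvd_iff.mp (pow_dvd_pow_of_dvd hX n) N h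

theorem card_filter_piAntidiag_eq_coeff_pow (s : Finset ℕ) (n N : ℕ) :
    #{f ∈ (univ : Finset (Fin n)).piAntidiag N | ∀ j, f j ∈ s}
      = ((∑ h ∈ s, (X : ℕ[X]) ^ h) ^ n).coeff N := by
  rw [← Fin.prod_const, prod_univ_sum]
  simp only [prod_pow_eq_pow_sum, finsetSum_coeff, coeff_X_pow, sum_boole, Nat.cast_id]
  congr 1
  ext f
  simp [Fintype.mem_piFinset, eq_comm, and_comm]

theorem coeff_pow_sum_X_pow_eq_sum_multinomial {ι : Type*} [DecidableEq ι] (s : Finset ι)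
    (w : ι → ℕ) (n N : ℕ) :
    ((∑ j ∈ s, (X : ℕ[X]) ^ w j) ^ n).coeff N
      = ∑ x ∈ s.piAntidiag n with ∑ j ∈ s, w j * x j = N, Nat.multinomial s x := by
  rw [sum_pow_eq_sum_piAntidiag]
  simp only [← pow_mul, prod_pow_eq_pow_sum, finsetSum_coeff, ← C_eq_natCast, coeff_C_mul_X_pow,
    sum_filter, eq_comm, Nat.cast_id]

theorem cast_multinomial_eq_div {ι K : Type*} [DecidableEq ι] [Field K] [CharZero K]
    (s : Finset ι) (x : ι → ℕ) :
    (Nat.multinomial s x : K)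
      = ((∑ j ∈ s, x j).factorial : K) / ∏ j ∈ s, ((x j).factorial : K) := by
  rw [eq_div_iff (prod_ne_zero_iff.mpr fun j _ => Nat.cast_ne_zero.mpr (Nat.factorial_ne_zero _)),
    mul_comm]
  exact_mod_cast Nat.multinomial_spec s x

theorem sum_Icc_one_eq_sum_fin {M : Type*} [AddCommMonoid M] (f : ℕ → M) (i : ℕ) :
    ∑ h ∈ Icc 1 i, f h = ∑ j : Fin i, f (j + 1) := by
  rw [Fin.sum_univ_eq_sum_range (fun j => f (j + 1)), range_eq_Ico, sum_Ico_add']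
  rfl

theorem sum_filter_weight_eq_sum_range_sum_piAntidiag {ι M : Type*} [Fintype ι] [DecidableEq ι]
    [AddCommMonoid M] {w : ι → ℕ} (hw : ∀ j, 1 ≤ w j) {N R : ℕ} (hNR : N < R)
    (g : (ι → ℕ) → M) :
    ∑ x ∈ Fintype.piFinset (fun _ : ι => range (N + 1)) with ∑ j, w j * x j = N, g x
      = ∑ n ∈ range R, ∑ x ∈ (univ : Finset ι).piAntidiag n with ∑ j, w j * x j = N, g x := by
  have hle (x : ι → ℕ) : ∑ j, x j ≤ ∑ j, w j * x j :=
    sum_le_sum fun j _ => Nat.le_mul_of_pos_left _ (hw j)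
  rw [← sum_fiberwise_of_maps_to (g := fun x => ∑ j, x j) (t := range R)]
  · refine sum_congr rfl fun n _ => sum_congr ?_ fun _ _ => rfl
    ext x
    simp only [mem_filter, Fintype.mem_piFinset, mem_range, mem_piAntidiag, mem_univ,
      implies_true, and_true]
    constructor
    · exact fun ⟨⟨_, hx⟩, hn⟩ => ⟨hn, hx⟩
    · refine fun ⟨hn, hx⟩ => ⟨⟨fun j => Nat.lt_succ_of_le ?_, hx⟩, hn⟩
      exact (single_le_sum (fun j _ => Nat.zero_le (x j)) (mem_univ j)).trans (hx ▸ hle x)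
  · intro x hx
    exact mem_range.mpr (((hle x).trans (mem_filter.mp hx).2.le).trans_lt hNR)

noncomputable def stepPoly (i : ℕ) : ℕ[X] := ∑ h ∈ Icc 1 i, X ^ h

theorem coeff_stepPoly_pow_eq_zero {i n N : ℕ} (h : N < n) : (stepPoly i ^ n).coeff N = 0 :=
  coeff_pow_sum_X_pow_eq_zero (by simp) h

theorem coeff_stepPoly_pow_succ (i n N : ℕ) :
    (stepPoly i ^ (n + 1)).coeff N = ∑ h ∈ Icc 1 (min i N), (stepPoly i ^ n).coeff (N - h) := by
  rw [pow_succ', stepPoly, coeff_sum_X_pow_mul]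
  congr 1
  ext h
  simp only [mem_filter, mem_Icc, le_min_iff]
  omega

theorem coeff_stepPoly_pow_eq_sum_multinomial (i n N : ℕ) :
    (stepPoly i ^ n).coeff N
      = ∑ x ∈ (univ : Finset (Fin i)).piAntidiag n with ∑ j : Fin i, (j.1 + 1) * x j = N,
          Nat.multinomial univ x := by
  rw [stepPoly, sum_Icc_one_eq_sum_fin (X ^ ·), coeff_pow_sum_X_pow_eq_sum_multinomial]

theorem sum_weight_eq_sum_range_coeff_stepPoly_pow {i N R : ℕ} (hNR : N < R) :
    ∑ x ∈ (Fintype.piFinset fun _ : Fin i => range (N + 1)).filter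
        (fun x => ∑ j : Fin i, (j.1 + 1) * x j = N),
      (((∑ j : Fin i, x j).factorial : ℝ) / ∏ j : Fin i, ((x j).factorial : ℝ)) *
        ((i : ℝ) ^ ((∑ j : Fin i, x j) + 1))⁻¹
      = ∑ n ∈ range R, ((stepPoly i ^ n).coeff N : ℝ) * ((i : ℝ) ^ (n + 1))⁻¹ := by
  rw [sum_filter_weight_eq_sum_range_sum_piAntidiag (w := fun j : Fin i => j.1 + 1)
    (fun j => Nat.le_add_left 1 j.1) hNR]
  refine sum_congr rfl fun n _ => ?_
  rw [coeff_stepPoly_pow_eq_sum_multinomial, Nat.cast_sum, sum_mul]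
  refine sum_congr rfl fun x hx => ?_
  rw [cast_multinomial_eq_div, (mem_piAntidiag.mp (mem_filter.mp hx).1).1]

theorem sum_range_coeff_stepPoly_pow_succ (i k : ℕ) :
    ∑ n ∈ range k, ((stepPoly i ^ (n + 1)).coeff k : ℝ) * ((i : ℝ) ^ (n + 1))⁻¹
      = ∑ h ∈ Icc 1 (min i k),
          ∑ x ∈ (Fintype.piFinset fun _ : Fin i => range (k - h + 1)).filter
              (fun x => ∑ j : Fin i, (j.1 + 1) * x j = k - h),
            (((∑ j : Fin i, x j).factorial : ℝ) / ∏ j : Fin i, ((x j).factorial : ℝ)) *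
              ((i : ℝ) ^ ((∑ j : Fin i, x j) + 1))⁻¹ := by
  rw [sum_congr rfl fun h hh => sum_weight_eq_sum_range_coeff_stepPoly_pow
    (by simp only [mem_Icc, le_min_iff] at hh; omega : k - h < k), sum_comm]
  refine sum_congr rfl fun n _ => ?_
  rw [coeff_stepPoly_pow_succ, Nat.cast_sum, sum_mul]

theorem measure_setOf_exists_eq_eq_tsum {Ω β : Type*} [MeasurableSpace Ω] [MeasurableSpace β]
    [MeasurableSingletonClass β] {μ : Measure Ω} {S : ℕ → Ω → β} (hS : ∀ n, Measurable (S n))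
    (hinj : ∀ᵐ ω ∂μ, Function.Injective fun n => S n ω) (b : β) :
    μ {ω | ∃ n, S n ω = b} = ∑' n, μ {ω | S n ω = b} := by
  rw [Set.ofPred_exists]
  refine measure_iUnion₀ (fun m n hmn => ?_)
    fun n => (hS n (measurableSet_singleton b)).nullMeasurableSet
  refine measure_mono_null (fun ω hω => ?_) (ae_iff.mp hinj)
  exact fun hinjω => hmn (hinjω (hω.1.trans hω.2.symm))

theorem strictMono_sum_range {f : ℕ → ℕ} (hf : ∀ m, f m ≠ 0) :
    StrictMono fun n => ∑ m ∈ range n, f m :=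
  strictMono_nat_of_lt_succ fun n => by
    rw [sum_range_succ]; exact Nat.lt_add_of_pos_right (Nat.pos_of_ne_zero (hf n))

theorem measure_sum_range_eq_sum_piAntidiag {Ω : Type*} [MeasurableSpace Ω] {P : Measure Ω}
    {Y : ℕ → Ω → ℕ} (hY : ∀ m, Measurable (Y m)) (hindep : iIndepFun Y P) (n N : ℕ) :
    P {ω | ∑ m ∈ range n, Y m ω = N}
      = ∑ f ∈ (univ : Finset (Fin n)).piAntidiag N, ∏ j : Fin n, P {ω | Y j ω = f j} := by
  have hunion : {ω | ∑ m ∈ range n, Y m ω = N}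
      = ⋃ f ∈ (univ : Finset (Fin n)).piAntidiag N, ⋂ j : Fin n, {ω | Y j ω = f j} := by
    ext ω
    simp only [Set.mem_ofPred_eq, Set.mem_iUnion, Set.mem_iInter, mem_piAntidiag, mem_univ,
      implies_true, and_true, exists_prop]
    constructor
    · intro hω
      exact ⟨fun j => Y j ω, by rwa [Fin.sum_univ_eq_sum_range (Y · ω)], fun j => rfl⟩
    · rintro ⟨f, hf, hω⟩
      rw [← Fin.sum_univ_eq_sum_range (Y · ω), ← hf]
      exact sum_congr rfl fun j _ => hω j
  rw [hunion, measure_biUnion_finset]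
  · exact sum_congr rfl fun f _ => (hindep.precomp Fin.val_injective).meas_iInter
      fun j => ⟨{f j}, measurableSet_singleton _, rfl⟩
  · intro f _ g _ hfg
    refine Set.disjoint_left.mpr fun ω hf hg => hfg (funext fun j => ?_)
    exact (Set.mem_iInter.mp hf j).symm.trans (Set.mem_iInter.mp hg j)
  · exact fun f _ => MeasurableSet.iInter fun j => hY j (measurableSet_singleton _)

theorem measure_sum_range_eq_coeff_stepPoly_pow {Ω : Type*} [MeasurableSpace Ω] {P : Measure Ω}
    {i : ℕ} (hi : 1 ≤ i) {Y : ℕ → Ω → ℕ} (hY : ∀ m, Measurable (Y m)) (hindep : iIndepFun Y P)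
    (hunif : ∀ m x, P {ω | Y m ω = x} = if x ∈ Icc 1 i then (1 : ENNReal) / i else 0)
    (n N : ℕ) :
    P {ω | ∑ m ∈ range n, Y m ω = N}
      = ENNReal.ofReal (((stepPoly i ^ n).coeff N : ℝ) * ((i : ℝ) ^ n)⁻¹) := by
  rw [measure_sum_range_eq_sum_piAntidiag hY hindep]
  simp only [hunif, prod_ite_zero, Fin.prod_const]
  rw [← sum_filter, sum_const]
  simp only [mem_univ, true_implies]
  rw [stepPoly, ← card_filter_piAntidiag_eq_coeff_pow, nsmul_eq_mul,
    ENNReal.ofReal_mul (by positivity), ENNReal.ofReal_natCast,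
    ENNReal.ofReal_inv_of_pos (by positivity), ENNReal.ofReal_pow (by positivity),
    ENNReal.ofReal_natCast, one_div, ENNReal.inv_pow]

theorem hitting_probability_uniform_walk_sum_formula_general
    {Ω : Type*} [MeasurableSpace Ω] (P : Measure Ω)
    (i : ℕ) (hi : 1 ≤ i)
    (X : ℕ → Ω → ℕ)
    (hXmeas : ∀ m, Measurable (X m))
    (hXindep : iIndepFun X P)
    (hXunif : ∀ m x, P {ω | X m ω = x} =
      if x ∈ Finset.Icc 1 i then (1 : ENNReal) / i else 0)
    (S : ℕ → Ω → ℕ)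
    (hS : ∀ n ω, S n ω = ∑ m ∈ Finset.range n, X m ω)
    (k : ℕ) :
    P {ω | ∃ n ≥ 1, S n ω = k} =
      ENNReal.ofReal
        (∑ h ∈ Finset.Icc 1 (min i k),
          ∑ x ∈ (Fintype.piFinset fun _ : Fin i => Finset.range (k - h + 1)).filter
              (fun x => ∑ j : Fin i, (j.1 + 1) * x j = k - h),
            (((∑ j : Fin i, x j).factorial : ℝ) / ∏ j : Fin i, ((x j).factorial : ℝ)) *
              ((i : ℝ) ^ ((∑ j : Fin i, x j) + 1))⁻¹) := by
  obtain rfl : S = fun n ω => ∑ m ∈ range n, X m ω := funext fun n => funext (hS n)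
  have hpos : ∀ᵐ ω ∂P, ∀ m, X m ω ≠ 0 :=
    ae_all_iff.mpr fun m => ae_iff.mpr (by simpa using hXunif m 0)
  have hinj : ∀ᵐ ω ∂P, Function.Injective fun n => ∑ m ∈ range (n + 1), X m ω :=
    hpos.mono fun ω hω => (strictMono_sum_range hω).injective.comp (add_left_injective 1)
  calc P {ω | ∃ n ≥ 1, ∑ m ∈ range n, X m ω = k}
      = P {ω | ∃ n, ∑ m ∈ range (n + 1), X m ω = k} := by
        congr 1
        ext ω
        exact ⟨fun ⟨n, hn, h⟩ => ⟨n - 1, by rwa [Nat.sub_add_cancel hn]⟩,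
          fun ⟨n, h⟩ => ⟨n + 1, n.succ_pos, h⟩⟩
    _ = ∑' n, P {ω | ∑ m ∈ range (n + 1), X m ω = k} :=
        measure_setOf_exists_eq_eq_tsum
          (fun n => Finset.measurable_sum _ fun m _ => hXmeas m) hinj k
    _ = ∑ n ∈ range k,
          ENNReal.ofReal (((stepPoly i ^ (n + 1)).coeff k : ℝ) * ((i : ℝ) ^ (n + 1))⁻¹) := by
        simp only [measure_sum_range_eq_coeff_stepPoly_pow hi hXmeas hXindep hXunif]
        refine tsum_eq_sum fun n hn => ?_
        rw [coeff_stepPoly_pow_eq_zero (by simpa using hn), Nat.cast_zero, zero_mul,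
          ENNReal.ofReal_zero]
    _ = _ := by
        rw [← ENNReal.ofReal_sum_of_nonneg (fun n _ => by positivity),
          sum_range_coeff_stepPoly_pow_succ]

/-- Hitting probability of level `k` for the random walk with i.i.d. steps uniform on
`{1, …, i}` (equivalently, for the Poisson process of order `i`), expressed as the double
sum `∑_{h=1}^{min(i,k)} ∑_{x ∈ ℕ^i, ∑ j x_j = k-h} ((x_1+⋯+x_i)!/(x_1!⋯x_i!)) i^{-(x_1+⋯+x_i+1)}`. -/
theorem hitting_probability_uniform_walk_sum_formula
    {Ω : Type*} [MeasurableSpace Ω] (P : Measure Ω) [IsProbabilityMeasure P]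
    (i : ℕ) (hi : 1 ≤ i)
    (X : ℕ → Ω → ℕ)
    (hXmeas : ∀ m, Measurable (X m))
    (hXindep : iIndepFun X P)
    (hXunif : ∀ m x, P {ω | X m ω = x} =
      if x ∈ Finset.Icc 1 i then (1 : ENNReal) / i else 0)
    (S : ℕ → Ω → ℕ)
    (hS : ∀ n ω, S n ω = ∑ m ∈ Finset.range n, X m ω)
    (k : ℕ) (hk : 1 ≤ k) :
    P {ω | ∃ n ≥ 1, S n ω = k} =
      ENNReal.ofReal
        (∑ h ∈ Finset.Icc 1 (min i k),
          ∑ x ∈ (Fintype.piFinset fun _ : Fin i => Finset.range (k - h + 1)).filter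
              (fun x => ∑ j : Fin i, (j.1 + 1) * x j = k - h),
            (((∑ j : Fin i, x j).factorial : ℝ) / ∏ j : Fin i, ((x j).factorial : ℝ)) *
              ((i : ℝ) ^ ((∑ j : Fin i, x j) + 1))⁻¹) :=
  hitting_probability_uniform_walk_sum_formula_general P i hi X hXmeas hXindep hXunif S hS k
end

section
/- Let λ > 0 and let i ≥ 1 be an integer. Let (B_m)_{m≥1} be i.i.d. ℕ-valued random variables with P(B_m = n) = Σ_{(x_1,…,x_i)∈ℕ^i, x_1+2x_2+⋯+i·x_i = n} e^{−iλ} λ^{x_1+⋯+x_i}/(x_1!⋯x_i!) (the Poisson distribution of order i with parameter λ), and set V_n = B_1 + ⋯ + B_n. Then P(∃ n ≥ 1, V_n = 1) = λ e^{−iλ}/(1 − e^{−iλ}), and this probability is strictly less than 1. -/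
/-!
The first nonzero step of the walk must be `1`, so `V` hits `1` exactly when, for some `k`,
the steps `B_0, …, B_{k-1}` vanish and `B_k = 1`. These events are disjoint and, by
independence, have probability `λe^{-iλ} (e^{-iλ})^k`; summing the geometric series gives
`λe^{-iλ}/(1 - e^{-iλ})`. This is less than `1` because `λ + 1 < e^λ ≤ e^{iλ}`.
-/

open MeasureTheory ProbabilityTheory Finset Real

noncomputable def poissonOrderMass (lam : ℝ) (i n : ℕ) : ℝ :=
  ∑ x ∈ (Fintype.piFinset fun _ : Fin i => range (n + 1)).filter
      (fun x => ∑ j : Fin i, (j.1 + 1) * x j = n),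
    exp (-(i * lam)) * lam ^ (∑ j : Fin i, x j) / ∏ j : Fin i, ((x j).factorial : ℝ)

lemma weighted_sum_eq_one_iff {k : ℕ} (x : Fin (k + 1) → ℕ) :
    ∑ j : Fin (k + 1), (j.1 + 1) * x j = 1 ↔ x = Pi.single 0 1 := by
  constructor
  · intro hx
    have hterm : ∀ j, (j.1 + 1) * x j ≤ 1 := fun j =>
      (single_le_sum (f := fun j : Fin (k + 1) => (j.1 + 1) * x j)
        (fun _ _ => Nat.zero_le _) (mem_univ j)).trans_eq hx
    have hsucc : ∀ j : Fin k, x j.succ = 0 := fun j => by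
      have := hterm j.succ
      simp only [Fin.val_succ] at this
      nlinarith
    rw [Fin.sum_univ_succ] at hx
    simp only [hsucc, Fin.val_zero, mul_zero, sum_const_zero] at hx
    ext j
    cases j using Fin.cases <;> simp_all
  · rintro rfl
    rw [Fin.sum_univ_succ]
    simp

lemma poissonOrderMass_zero (lam : ℝ) (i : ℕ) :
    poissonOrderMass lam i 0 = exp (-(i * lam)) := by
  have hsupp : (Fintype.piFinset fun _ : Fin i => range (0 + 1)).filter
      (fun x => ∑ j : Fin i, (j.1 + 1) * x j = 0) = {0} := by
    ext x
    simp [sum_eq_zero_iff, funext_iff]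
  rw [poissonOrderMass, hsupp]
  simp

lemma poissonOrderMass_one (lam : ℝ) {i : ℕ} (hi : 1 ≤ i) :
    poissonOrderMass lam i 1 = lam * exp (-(i * lam)) := by
  obtain ⟨k, rfl⟩ := Nat.exists_eq_add_of_le' hi
  have hsupp : (Fintype.piFinset fun _ : Fin (k + 1) => range (1 + 1)).filter
      (fun x => ∑ j : Fin (k + 1), (j.1 + 1) * x j = 1) =
        {(Pi.single 0 1 : Fin (k + 1) → ℕ)} := by
    ext x
    simp only [mem_filter, Fintype.mem_piFinset, mem_singleton, weighted_sum_eq_one_iff]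
    constructor
    · exact And.right
    · rintro rfl
      refine ⟨fun j => ?_, rfl⟩
      rcases eq_or_ne j 0 with rfl | hj <;> simp [*]
  have hfact : ∏ j : Fin (k + 1), (((Pi.single 0 1 : Fin (k + 1) → ℕ) j).factorial : ℝ) = 1 :=
    prod_eq_one fun j _ => by rcases eq_or_ne j 0 with rfl | hj <;> simp [*]
  rw [poissonOrderMass, hsupp, sum_singleton, hfact, sum_pi_single']
  simp [mul_comm]

lemma lam_mul_exp_neg_lt_one_sub_exp_neg {lam : ℝ} (hlam : 0 < lam) {i : ℕ} (hi : 1 ≤ i) :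
    lam * exp (-(i * lam)) < 1 - exp (-(i * lam)) := by
  have hexp : lam + 1 < exp (i * lam) :=
    calc lam + 1 < exp lam := add_one_lt_exp hlam.ne'
      _ ≤ exp (i * lam) := exp_le_exp.2 (le_mul_of_one_le_left hlam.le (by exact_mod_cast hi))
  have hinv : exp (-(i * lam)) * exp (i * lam) = 1 := by rw [← exp_add]; simp
  nlinarith [exp_pos (-(i * lam))]

section HittingOne

lemma exists_sum_range_eq_one_iff (b : ℕ → ℕ) :
    (∃ n ≥ 1, ∑ m ∈ range n, b m = 1) ↔ ∃ k, (∀ m < k, b m = 0) ∧ b k = 1 := by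
  constructor
  · rintro ⟨n, -, hn⟩
    have hex : ∃ m, b m ≠ 0 := by
      by_contra! h
      simp [h] at hn
    refine ⟨Nat.find hex, fun m hm => not_not.1 (Nat.find_min hex hm), ?_⟩
    have hlt : Nat.find hex < n := by
      by_contra! h
      rw [sum_eq_zero fun m hm => not_not.1 (Nat.find_min hex ((mem_range.1 hm).trans_le h))]
        at hn
      exact zero_ne_one hn
    have hle : b (Nat.find hex) ≤ 1 :=
      hn ▸ single_le_sum (fun _ _ => Nat.zero_le _) (mem_range.2 hlt)
    have := Nat.find_spec hex
    omega
  · rintro ⟨k, hzero, hone⟩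
    refine ⟨k + 1, by omega, ?_⟩
    rw [sum_range_succ, sum_eq_zero fun m hm => hzero m (mem_range.1 hm), hone]

lemma eq_of_first_nonzero_eq_one {b : ℕ → ℕ} {k l : ℕ}
    (hk : (∀ m < k, b m = 0) ∧ b k = 1) (hl : (∀ m < l, b m = 0) ∧ b l = 1) : k = l := by
  by_contra! hkl
  rcases hkl.lt_or_gt with h | h
  · simp [hl.1 k h] at hk
  · simp [hk.1 l h] at hl

variable {Ω : Type*} [MeasurableSpace Ω] {P : Measure Ω} {B : ℕ → Ω → ℕ}

lemma measure_first_nonzero_eq_one (hB : iIndepFun B P) (k : ℕ) :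
    P {ω | (∀ m < k, B m ω = 0) ∧ B k ω = 1} =
      P {ω | B k ω = 1} * ∏ m ∈ range k, P {ω | B m ω = 0} := by
  have hset : {ω | (∀ m < k, B m ω = 0) ∧ B k ω = 1} =
      ⋂ m ∈ range (k + 1), B m ⁻¹' {if m = k then 1 else 0} := by
    ext ω
    simp only [Set.mem_ofPred_eq, Set.mem_iInter, mem_range, Set.mem_preimage,
      Set.mem_singleton_iff]
    constructor
    · rintro ⟨hzero, hone⟩ m hm
      rcases (Nat.lt_succ_iff.1 hm).lt_or_eq with h | rfl
      · simp [h.ne, hzero m h]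
      · simp [hone]
    · intro h
      exact ⟨fun m hm => by simpa [hm.ne] using h m (by omega), by simpa using h k (by omega)⟩
  rw [hset, hB.meas_biInter fun m _ => ⟨_, measurableSet_singleton _, rfl⟩, prod_range_succ,
    mul_comm]
  congr 1
  · rw [if_pos rfl]; rfl
  · exact prod_congr rfl fun m hm => by rw [if_neg (mem_range.1 hm).ne]; rfl

lemma measure_exists_sum_range_eq_one (hmeas : ∀ m, Measurable (B m)) (hB : iIndepFun B P)
    {p₀ p₁ : ENNReal} (h₀ : ∀ m, P {ω | B m ω = 0} = p₀) (h₁ : ∀ m, P {ω | B m ω = 1} = p₁) :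
    P {ω | ∃ n ≥ 1, ∑ m ∈ range n, B m ω = 1} = p₁ * (1 - p₀)⁻¹ := by
  have hset : {ω | ∃ n ≥ 1, ∑ m ∈ range n, B m ω = 1} =
      ⋃ k, {ω | (∀ m < k, B m ω = 0) ∧ B k ω = 1} := by
    ext ω
    simp only [Set.mem_ofPred_eq, Set.mem_iUnion]
    exact exists_sum_range_eq_one_iff fun m => B m ω
  have hdisj : Pairwise (Function.onFun Disjoint
      fun k => {ω | (∀ m < k, B m ω = 0) ∧ B k ω = 1}) := fun k l hkl =>
    Set.disjoint_left.2 fun ω hk hl => hkl (eq_of_first_nonzero_eq_one hk hl)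
  have hmeasSet : ∀ k, MeasurableSet {ω | (∀ m < k, B m ω = 0) ∧ B k ω = 1} := fun k => by
    simp only [Set.ofPred_and, Set.ofPred_forall]
    exact (MeasurableSet.iInter fun m => MeasurableSet.iInter fun _ =>
      hmeas m (measurableSet_singleton 0)).inter (hmeas k (measurableSet_singleton 1))
  rw [hset, measure_iUnion hdisj hmeasSet]
  simp_rw [measure_first_nonzero_eq_one hB, h₀, h₁, prod_const, card_range]
  rw [ENNReal.tsum_mul_left, ENNReal.tsum_geometric]

end HittingOne

lemma ENNReal.ofReal_mul_inv_one_sub_ofReal (x : ℝ) {a : ℝ} (ha : 0 ≤ a) (ha1 : a < 1) :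
    ENNReal.ofReal x * (1 - ENNReal.ofReal a)⁻¹ = ENNReal.ofReal (x / (1 - a)) := by
  rw [ENNReal.ofReal_div_of_pos (sub_pos.2 ha1), div_eq_mul_inv, ENNReal.ofReal_sub _ ha,
    ENNReal.ofReal_one]

/-- For the random walk `V_n = B_1 + ⋯ + B_n` whose i.i.d. steps follow the Poisson
distribution of order `i` with parameter `λ`, the probability of hitting level `1` equals
`λ e^{-iλ}/(1 - e^{-iλ})`, and it is strictly less than `1`. -/
theorem hitting_level_one_order_i_walk
    {Ω : Type*} [MeasurableSpace Ω] (P : Measure Ω) [IsProbabilityMeasure P]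
    (lam : ℝ) (hlam : 0 < lam) (i : ℕ) (hi : 1 ≤ i)
    (B : ℕ → Ω → ℕ)
    (hBmeas : ∀ m, Measurable (B m))
    (hBindep : iIndepFun B P)
    (hBpmf : ∀ m n, P {ω | B m ω = n} =
      ENNReal.ofReal
        (∑ x ∈ (Fintype.piFinset fun _ : Fin i => Finset.range (n + 1)).filter
            (fun x => ∑ j : Fin i, (j.1 + 1) * x j = n),
          Real.exp (-(i * lam)) * lam ^ (∑ j : Fin i, x j) /
            ∏ j : Fin i, ((x j).factorial : ℝ)))
    (V : ℕ → Ω → ℕ)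
    (hV : ∀ n ω, V n ω = ∑ m ∈ Finset.range n, B m ω) :
    P {ω | ∃ n ≥ 1, V n ω = 1} =
      ENNReal.ofReal (lam * Real.exp (-(i * lam)) / (1 - Real.exp (-(i * lam)))) ∧
    P {ω | ∃ n ≥ 1, V n ω = 1} < 1 := by
  obtain rfl : V = fun n ω => ∑ m ∈ range n, B m ω := funext₂ hV
  have hlt : exp (-(i * lam)) < 1 :=
    exp_lt_one_iff.2 (neg_neg_of_pos (mul_pos (by exact_mod_cast hi) hlam))
  have hhit := measure_exists_sum_range_eq_one hBmeas hBindep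
    (fun m => (hBpmf m 0).trans (congrArg _ (poissonOrderMass_zero lam i)))
    (fun m => (hBpmf m 1).trans (congrArg _ (poissonOrderMass_one lam hi)))
  rw [ENNReal.ofReal_mul_inv_one_sub_ofReal _ (exp_pos _).le hlt] at hhit
  refine ⟨hhit, ?_⟩
  rw [hhit, ENNReal.ofReal_lt_one, div_lt_one (sub_pos.2 hlt)]
  exact lam_mul_exp_neg_lt_one_sub_exp_neg hlam hi
end

section
/- Let λ > 0 and let i ≥ 1 be an integer. Let (B_m)_{m≥1} be i.i.d. ℕ-valued random variables with P(B_m = n) = Σ_{(x_1,…,x_i)∈ℕ^i, x_1+2x_2+⋯+i·x_i = n} e^{−iλ} λ^{x_1+⋯+x_i}/(x_1!⋯x_i!) (the Poisson distribution of order i with parameter λ), and set V_n = B_1 + ⋯ + B_n. Then for every integer k ≥ 1, P(∃ n ≥ 1, V_n = k) = Σ_{h=1}^{k} [ Σ_{(x_1,…,x_i)∈ℕ^i, x_1+2x_2+⋯+i·x_i = k−h} (λ^{x_1+⋯+x_i}/(x_1!⋯x_i!)) · Σ_{r=0}^∞ e^{−iλr} r^{x_1+⋯+x_i} ] · [ Σ_{(x_1,…,x_i)∈ℕ^i,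 x_1+2x_2+⋯+i·x_i = h} e^{−iλ} λ^{x_1+⋯+x_i}/(x_1!⋯x_i!) ]. -/
/-!
A step is `∑ j, j • N_j` with independent `N_j ~ Poisson(λ)`. Coordinatewise, the binomial theorem
gives `(s + t)^m / m! = ∑ s^c / c! · t^(m-c) / (m-c)!`, so the Poisson laws of order `i` form a
convolution semigroup in the parameter and `P(V_n = v) = e^{-inλ} ∑_x (nλ)^{|x|} / x!`.
Since the steps are in `ℕ`, the walk reaches `k ≥ 1` iff for exactly one `n` it sits at some
`k - h < k` at time `n` and then makes the step `B_n = h`. By independence of `V_n` and `B_n`,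
summing over `n` produces the Green function
`∑_n P(V_n = k - h) = ∑_x λ^{|x|} / x! · ∑_r e^{-iλr} r^{|x|}`.
-/

open MeasureTheory ProbabilityTheory Finset Real

open scoped Nat

lemma add_pow_div_factorial (s t : ℝ) (m : ℕ) :
    (s + t) ^ m / m ! = ∑ c ∈ Iic m, s ^ c / c ! * (t ^ (m - c) / (m - c)!) := by
  rw [add_pow, sum_div, ← Nat.range_succ_eq_Iic]
  refine sum_congr rfl fun c hc => ?_
  have hcm : c ≤ m := Nat.lt_succ_iff.mp (mem_range.mp hc)
  have hfact : (m.choose c * c ! * (m - c)! : ℝ) = m ! := by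
    exact_mod_cast Nat.choose_mul_factorial_mul_factorial hcm
  field_simp
  linear_combination s ^ c * t ^ (m - c) * hfact

section PoissonWeight

variable {ι : Type*} [Fintype ι]

/-- Up to the factor `exp (-(card ι * t))`, the joint law at `x` of independent `Poisson(t)`
variables. -/
noncomputable def poissonWeight (t : ℝ) (x : ι → ℕ) : ℝ := ∏ j, t ^ x j / (x j)!

lemma poissonWeight_eq (t : ℝ) (x : ι → ℕ) :
    poissonWeight t x = t ^ (∑ j, x j) / ∏ j, ((x j)! : ℝ) := by
  rw [poissonWeight, prod_div_distrib, prod_pow_eq_pow_sum]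

lemma poissonWeight_nonneg {t : ℝ} (ht : 0 ≤ t) (x : ι → ℕ) : 0 ≤ poissonWeight t x :=
  prod_nonneg fun _ _ => by positivity

lemma poissonWeight_zero_left [DecidableEq ι] (x : ι → ℕ) :
    poissonWeight 0 x = if x = 0 then 1 else 0 := by
  split_ifs with hx
  · simp [poissonWeight, hx]
  · obtain ⟨j, hj⟩ := Function.ne_iff.mp hx
    exact prod_eq_zero (mem_univ j) (by simp [show x j ≠ 0 from hj])

lemma poissonWeight_add [DecidableEq ι] (s t : ℝ) (z : ι → ℕ) :
    poissonWeight (s + t) z = ∑ x ∈ Iic z, poissonWeight s x * poissonWeight t (z - x) := by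
  simp_rw [poissonWeight, add_pow_div_factorial, prod_univ_sum, ← prod_mul_distrib]
  -- `Iic z` in `ι → ℕ` is by definition `piFinset fun j => Iic (z j)`
  rfl

end PoissonWeight

section PartitionMultiplicities

/-- The integer partitioned by the multiplicity vector `x`: `x j` is the number of parts equal to
`j + 1`. -/
def partSum {i : ℕ} (x : Fin i → ℕ) : ℕ := ∑ j : Fin i, (j.1 + 1) * x j

def partitionMultiplicities (i n : ℕ) : Finset (Fin i → ℕ) :=
  (Fintype.piFinset fun _ : Fin i => range (n + 1)).filter (fun x => partSum x = n)

variable {i : ℕ}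

lemma partSum_add (x y : Fin i → ℕ) : partSum (x + y) = partSum x + partSum y := by
  simp [partSum, mul_add, sum_add_distrib]

lemma mem_partitionMultiplicities {n : ℕ} {x : Fin i → ℕ} :
    x ∈ partitionMultiplicities i n ↔ partSum x = n := by
  refine ⟨fun hx => (mem_filter.mp hx).2, fun hx => mem_filter.mpr ⟨?_, hx⟩⟩
  refine Fintype.mem_piFinset.mpr fun j => mem_range_succ_iff.mpr ?_
  calc x j ≤ (j.1 + 1) * x j := Nat.le_mul_of_pos_left _ j.1.succ_pos
    _ ≤ partSum x := single_le_sum (f := fun j => (j.1 + 1) * x j) (by simp) (mem_univ j)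
    _ = n := hx

lemma sum_antidiagonal_sum_mul_sum_partitionMultiplicities {R : Type*} [CommSemiring R]
    (f g : (Fin i → ℕ) → R) (n : ℕ) :
    ∑ ab ∈ antidiagonal n, (∑ x ∈ partitionMultiplicities i ab.1, f x) *
        ∑ y ∈ partitionMultiplicities i ab.2, g y =
      ∑ z ∈ partitionMultiplicities i n, ∑ x ∈ Iic z, f x * g (z - x) := by
  simp_rw [sum_mul_sum, ← sum_product']
  rw [sum_sigma', sum_sigma']
  refine sum_nbij' (fun q => ⟨q.2.1 + q.2.2, q.2.1⟩)
    (fun q => ⟨(partSum q.2, partSum (q.1 - q.2)), (q.2, q.1 - q.2)⟩) ?_ ?_ ?_ ?_ ?_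
  · rintro ⟨⟨a, b⟩, x, y⟩ hq
    simp_all [mem_partitionMultiplicities, partSum_add]
  · rintro ⟨z, x⟩ hq
    simp only [mem_sigma, mem_partitionMultiplicities, mem_Iic] at hq
    simp [mem_partitionMultiplicities, ← partSum_add, add_tsub_cancel_of_le hq.2, hq.1]
  · rintro ⟨⟨a, b⟩, x, y⟩ hq
    simp_all [mem_partitionMultiplicities]
  · rintro ⟨z, x⟩ hq
    simp_all [add_tsub_cancel_of_le]
  · rintro ⟨⟨a, b⟩, x, y⟩ -
    simp

end PartitionMultiplicities

section PoissonOrder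

variable {i : ℕ}

noncomputable def poissonOrderPMF (i : ℕ) (t : ℝ) (n : ℕ) : ℝ :=
  ∑ x ∈ partitionMultiplicities i n,
    exp (-(i * t)) * t ^ (∑ j : Fin i, x j) / ∏ j : Fin i, ((x j)! : ℝ)

lemma poissonOrderPMF_eq (t : ℝ) (n : ℕ) :
    poissonOrderPMF i t n =
      exp (-(i * t)) * ∑ x ∈ partitionMultiplicities i n, poissonWeight t x := by
  simp_rw [poissonOrderPMF, mul_sum, poissonWeight_eq, mul_div_assoc]

lemma poissonOrderPMF_nonneg {t : ℝ} (ht : 0 ≤ t) (n : ℕ) : 0 ≤ poissonOrderPMF i t n := by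
  rw [poissonOrderPMF_eq]
  exact mul_nonneg (exp_nonneg _) (sum_nonneg fun x _ => poissonWeight_nonneg ht x)

lemma poissonOrderPMF_zero_left (n : ℕ) : poissonOrderPMF i 0 n = if n = 0 then 1 else 0 := by
  simp [poissonOrderPMF_eq, poissonWeight_zero_left, mem_partitionMultiplicities, partSum, eq_comm]

lemma sum_antidiagonal_poissonOrderPMF_mul (s t : ℝ) (n : ℕ) :
    ∑ ab ∈ antidiagonal n, poissonOrderPMF i s ab.1 * poissonOrderPMF i t ab.2 =
      poissonOrderPMF i (s + t) n := by
  simp_rw [poissonOrderPMF_eq, mul_mul_mul_comm, ← mul_sum, ← exp_add,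
    sum_antidiagonal_sum_mul_sum_partitionMultiplicities, ← poissonWeight_add]
  ring_nf

/-- The sum over `n` is the expected number of visits to `v` of the walk with these steps. -/
lemma hasSum_poissonOrderPMF_natCast_mul (hi : 1 ≤ i) {lam : ℝ} (hlam : 0 < lam) (v : ℕ) :
    HasSum (fun n : ℕ => poissonOrderPMF i (n * lam) v)
      (∑ x ∈ partitionMultiplicities i v,
        lam ^ (∑ j : Fin i, x j) / (∏ j : Fin i, ((x j)! : ℝ)) *
          ∑' r : ℕ, exp (-(i * lam * r)) * (r : ℝ) ^ (∑ j : Fin i, x j)) := by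
  have hc : 0 < i * lam := mul_pos (by exact_mod_cast hi) hlam
  have hterm (n : ℕ) (x : Fin i → ℕ) : exp (-(i * (n * lam))) * poissonWeight (n * lam) x =
      lam ^ (∑ j, x j) / (∏ j, ((x j)! : ℝ)) *
        (exp (-(i * lam * n)) * (n : ℝ) ^ (∑ j, x j)) := by
    rw [poissonWeight_eq, mul_pow]
    ring_nf
  simp_rw [poissonOrderPMF_eq, mul_sum, hterm]
  refine hasSum_sum fun x _ => HasSum.mul_left _ (Summable.hasSum ?_)
  exact (summable_pow_mul_exp_neg_nat_mul (∑ j, x j) hc).congr fun r => by ring_nf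

end PoissonOrder

lemma Monotone.exists_ge_one_eq_iff_exists_lt_succ_eq {S : ℕ → ℕ} (hS : Monotone S) {k : ℕ}
    (h0 : S 0 < k) : (∃ n ≥ 1, S n = k) ↔ ∃ n, S n < k ∧ S (n + 1) = k := by
  refine ⟨?_, fun ⟨n, _, hn⟩ => ⟨n + 1, by omega, hn⟩⟩
  rintro ⟨m, -, hm⟩
  induction m with
  | zero => omega
  | succ m ih =>
    by_cases hlt : S m < k
    · exact ⟨m, hlt, hm⟩
    · exact ih (le_antisymm (hm ▸ hS m.le_succ) (not_lt.mp hlt))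

lemma ProbabilityTheory.IndepFun.measure_prodMk_mem_finset {Ω α β : Type*} [MeasurableSpace Ω]
    {P : Measure Ω} [MeasurableSpace α] [MeasurableSingletonClass α] [MeasurableSpace β]
    [MeasurableSingletonClass β] {X : Ω → α} {Y : Ω → β} (hXY : IndepFun X Y P)
    (hX : Measurable X) (hY : Measurable Y) (s : Finset (α × β)) :
    P {ω | (X ω, Y ω) ∈ s} = ∑ ab ∈ s, P {ω | X ω = ab.1} * P {ω | Y ω = ab.2} := by
  have hunion : {ω | (X ω, Y ω) ∈ s} = ⋃ ab ∈ s, X ⁻¹' {ab.1} ∩ Y ⁻¹' {ab.2} := by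
    ext ω
    simp
  have hdisj : Set.PairwiseDisjoint ↑s fun ab : α × β => X ⁻¹' {ab.1} ∩ Y ⁻¹' {ab.2} := by
    intro ab _ cd _ hne
    refine Set.disjoint_left.mpr fun ω ⟨_, _⟩ ⟨_, _⟩ => hne ?_
    simp_all [Prod.ext_iff]
  rw [hunion, measure_biUnion_finset hdisj fun ab _ =>
    (hX (measurableSet_singleton _)).inter (hY (measurableSet_singleton _))]
  exact sum_congr rfl fun ab _ => hXY.measure_inter_preimage_eq_mul _ _
    (measurableSet_singleton _) (measurableSet_singleton _)

section RandomWalk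

variable {Ω : Type*} [MeasurableSpace Ω] {P : Measure Ω} {B : ℕ → Ω → ℕ}

lemma measure_sum_range_succ_eq_sum_antidiagonal (hB : ∀ m, Measurable (B m))
    (hind : iIndepFun B P) (n m : ℕ) :
    P {ω | (∑ j ∈ range (n + 1), B j) ω = m} =
      ∑ ab ∈ antidiagonal m, P {ω | (∑ j ∈ range n, B j) ω = ab.1} * P {ω | B n ω = ab.2} := by
  rw [← (hind.indepFun_sum_range_succ hB n).measure_prodMk_mem_finset (by fun_prop) (hB n)]
  simp [sum_range_succ]

/-- First-passage decomposition: split according to the unique `n` with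
`∑ j ∈ range n, B j < k = ∑ j ∈ range (n + 1), B j`. -/
lemma measure_exists_sum_range_eq (hB : ∀ m, Measurable (B m)) (hind : iIndepFun B P) {k : ℕ}
    (hk : 1 ≤ k) :
    P {ω | ∃ n ≥ 1, (∑ j ∈ range n, B j) ω = k} =
      ∑' n, ∑ h ∈ Icc 1 k, P {ω | (∑ j ∈ range n, B j) ω = k - h} * P {ω | B n ω = h} := by
  set S : ℕ → Ω → ℕ := fun n => ∑ j ∈ range n, B j with hS
  have hmono : ∀ ω, Monotone fun n => S n ω :=
    fun ω => monotone_nat_of_le_succ fun n => by simp [hS, sum_range_succ]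
  have hSmeas : ∀ n, Measurable (S n) := fun n => by fun_prop
  have hunion : {ω | ∃ n ≥ 1, S n ω = k} = ⋃ n, {ω | S n ω < k ∧ S (n + 1) ω = k} := by
    ext ω
    simpa using (hmono ω).exists_ge_one_eq_iff_exists_lt_succ_eq (by simp [hS]; omega)
  have hdisj :
      Pairwise (Function.onFun Disjoint fun n => {ω | S n ω < k ∧ S (n + 1) ω = k}) := by
    refine (pairwise_disjoint_on _).mpr fun a b hab => Set.disjoint_left.mpr ?_
    rintro ω ⟨-, ha⟩ ⟨hb, -⟩
    have : S (a + 1) ω ≤ S b ω := hmono ω hab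
    omega
  rw [hunion, measure_iUnion hdisj fun n =>
    (hSmeas n measurableSet_Iio).inter (hSmeas (n + 1) (measurableSet_singleton k))]
  refine tsum_congr fun n => ?_
  have hinj : Function.Injective fun h : ℕ => (k - h, h) := fun _ _ hab => (Prod.ext_iff.mp hab).2
  calc P {ω | S n ω < k ∧ S (n + 1) ω = k}
      = P {ω | (S n ω, B n ω) ∈ (Icc 1 k).map ⟨_, hinj⟩} := by
        congr 1
        ext ω
        simp only [hS, sum_range_succ, Pi.add_apply, Set.mem_ofPred_eq, mem_map, mem_Icc,
          Function.Embedding.coeFn_mk, Prod.mk.injEq]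
        constructor
        · rintro ⟨hlt, heq⟩
          exact ⟨B n ω, ⟨by omega, by omega⟩, by omega, rfl⟩
        · rintro ⟨h, ⟨h1, hhk⟩, hSn, hBn⟩
          omega
    _ = _ := by
        rw [(hind.indepFun_sum_range_succ hB n).measure_prodMk_mem_finset (hSmeas n) (hB n),
          sum_map]
        rfl

lemma measure_sum_range_eq_poissonOrderPMF [IsProbabilityMeasure P] (hB : ∀ m, Measurable (B m))
    (hind : iIndepFun B P) {i : ℕ} {lam : ℝ} (hlam : 0 ≤ lam)
    (hlaw : ∀ m n, P {ω | B m ω = n} = ENNReal.ofReal (poissonOrderPMF i lam n)) (n m : ℕ) :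
    P {ω | (∑ j ∈ range n, B j) ω = m} = ENNReal.ofReal (poissonOrderPMF i (n * lam) m) := by
  induction n generalizing m with
  | zero =>
    rcases eq_or_ne m 0 with rfl | hm
    · simp [poissonOrderPMF_zero_left]
    · simp [poissonOrderPMF_zero_left, hm, hm.symm]
  | succ n ih =>
    rw [measure_sum_range_succ_eq_sum_antidiagonal hB hind, Nat.cast_succ, add_one_mul,
      ← sum_antidiagonal_poissonOrderPMF_mul, ENNReal.ofReal_sum_of_nonneg fun ab _ =>
        mul_nonneg (poissonOrderPMF_nonneg (by positivity) _) (poissonOrderPMF_nonneg hlam _)]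
    refine sum_congr rfl fun ab _ => ?_
    rw [ih, hlaw, ENNReal.ofReal_mul (poissonOrderPMF_nonneg (by positivity) _)]

end RandomWalk

/-- Hitting probability of level `k` for the random walk `V_n = B_1 + ⋯ + B_n` with i.i.d.
steps following the Poisson distribution of order `i` with parameter `λ`:
`P(∃ n ≥ 1, V_n = k) = ∑_{h=1}^{k} [ ∑_{x ∈ ℕ^i, ∑ j x_j = k-h} (λ^{x_1+⋯+x_i}/(x_1!⋯x_i!))
  ∑_{r=0}^∞ e^{-iλr} r^{x_1+⋯+x_i} ] · [ ∑_{x ∈ ℕ^i, ∑ j x_j = h} e^{-iλ} λ^{x_1+⋯+x_i}/(x_1!⋯x_i!) ]`. -/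
theorem hitting_probability_order_i_walk
    {Ω : Type*} [MeasurableSpace Ω] (P : Measure Ω) [IsProbabilityMeasure P]
    (lam : ℝ) (hlam : 0 < lam) (i : ℕ) (hi : 1 ≤ i)
    (B : ℕ → Ω → ℕ)
    (hBmeas : ∀ m, Measurable (B m))
    (hBindep : iIndepFun B P)
    (hBpmf : ∀ m n, P {ω | B m ω = n} =
      ENNReal.ofReal
        (∑ x ∈ (Fintype.piFinset fun _ : Fin i => Finset.range (n + 1)).filter
            (fun x => ∑ j : Fin i, (j.1 + 1) * x j = n),
          Real.exp (-(i * lam)) * lam ^ (∑ j : Fin i, x j) /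
            ∏ j : Fin i, ((x j).factorial : ℝ)))
    (V : ℕ → Ω → ℕ)
    (hV : ∀ n ω, V n ω = ∑ m ∈ Finset.range n, B m ω)
    (k : ℕ) (hk : 1 ≤ k) :
    P {ω | ∃ n ≥ 1, V n ω = k} =
      ENNReal.ofReal
        (∑ h ∈ Finset.Icc 1 k,
          (∑ x ∈ (Fintype.piFinset fun _ : Fin i => Finset.range (k - h + 1)).filter
              (fun x => ∑ j : Fin i, (j.1 + 1) * x j = k - h),
            lam ^ (∑ j : Fin i, x j) / (∏ j : Fin i, ((x j).factorial : ℝ)) *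
              ∑' r : ℕ, Real.exp (-(i * lam * r)) * (r : ℝ) ^ (∑ j : Fin i, x j)) *
          (∑ x ∈ (Fintype.piFinset fun _ : Fin i => Finset.range (h + 1)).filter
              (fun x => ∑ j : Fin i, (j.1 + 1) * x j = h),
            Real.exp (-(i * lam)) * lam ^ (∑ j : Fin i, x j) /
              ∏ j : Fin i, ((x j).factorial : ℝ))) := by
  obtain rfl : V = fun n => ∑ m ∈ range n, B m := by
    ext n ω
    rw [hV, Finset.sum_apply]
  have hlaw : ∀ m n, P {ω | B m ω = n} = ENNReal.ofReal (poissonOrderPMF i lam n) := hBpmf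
  have hwalk := measure_sum_range_eq_poissonOrderPMF hBmeas hBindep hlam.le hlaw
  have hgreen := hasSum_poissonOrderPMF_natCast_mul hi hlam
  have hwalk_nonneg : ∀ (n : ℕ) v, 0 ≤ poissonOrderPMF i (n * lam) v :=
    fun n => poissonOrderPMF_nonneg (by positivity)
  rw [measure_exists_sum_range_eq hBmeas hBindep hk,
    Summable.tsum_finsetSum fun _ _ => ENNReal.summable, ENNReal.ofReal_sum_of_nonneg]
  · refine sum_congr rfl fun h _ => ?_
    simp_rw [hwalk, hlaw]
    rw [ENNReal.tsum_mul_right, ← ENNReal.ofReal_tsum_of_nonneg (hwalk_nonneg · _)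
      (hgreen _).summable, (hgreen _).tsum_eq,
      ← ENNReal.ofReal_mul ((hgreen _).nonneg (hwalk_nonneg · _))]
    rfl
  · exact fun h _ =>
      mul_nonneg ((hgreen _).nonneg (hwalk_nonneg · _)) (poissonOrderPMF_nonneg hlam.le h)
end
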